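/- arXiv:1709.07372 — 4 statements merged into one kernel-verified Lean document; each statement's English description precedes it below -/
import Mathlib

section
/- The product of the three operators along each row of the Peres–Mermin square equals the 4×4 identity matrix: PM i 0 * PM i 1 * PM i 2 = 1 for every i : Fin 3; the product down column 0 and down column 1 also equals the identity: PM 0 0 * PM 1 0 * PM 2 0 = 1 and PM 0 1 * PM 1 1 * PM 2 1 = 1; but the product down column 2 equals minus the identity: PM 0 2 * PM 1 2 * PM 2 2 = -1. -/
open Matrix Complex Kronecker

noncomputable def σx : Matrix (Fin 2) (Fin 2) ℂ := !![0, 1; 1, 0]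
noncomputable def σy : Matrix (Fin 2) (Fin 2) ℂ := !![0, -I; I, 0]
noncomputable def σz : Matrix (Fin 2) (Fin 2) ℂ := !![1, 0; 0, -1]

noncomputable def PM : Fin 3 → Fin 3 → Matrix (Fin 2 × Fin 2) (Fin 2 × Fin 2) ℂ :=
  ![![σz ⊗ₖ 1, 1 ⊗ₖ σz, σz ⊗ₖ σz],
    ![1 ⊗ₖ σx, σx ⊗ₖ 1, σx ⊗ₖ σx],
    ![σz ⊗ₖ σx, σx ⊗ₖ σz, σy ⊗ₖ σy]]

set_option maxHeartbeats 2000000 in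
theorem peres_mermin_products :
    (∀ i : Fin 3, PM i 0 * PM i 1 * PM i 2 = 1) ∧
    PM 0 0 * PM 1 0 * PM 2 0 = 1 ∧
    PM 0 1 * PM 1 1 * PM 2 1 = 1 ∧
    PM 0 2 * PM 1 2 * PM 2 2 = -1 := by
  have key : ∀ (A B C D E F : Matrix (Fin 2) (Fin 2) ℂ) (G : Matrix (Fin 2 × Fin 2) (Fin 2 × Fin 2) ℂ),
      (A * C * E) ⊗ₖ (B * D * F) = G → A ⊗ₖ B * C ⊗ₖ D * E ⊗ₖ F = G := by
    intro A B C D E F G h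
    rw [← h, ← Matrix.mul_kronecker_mul, ← Matrix.mul_kronecker_mul]
  refine ⟨fun i => ?_, ?_, ?_, ?_⟩
  · fin_cases i <;>
    · refine key _ _ _ _ _ _ _ ?_
      ext ⟨a, b⟩ ⟨c, d⟩
      fin_cases a <;> fin_cases b <;> fin_cases c <;> fin_cases d <;>
        · simp [σx, σy, σz, Matrix.mul_apply, Fin.sum_univ_succ, Matrix.one_apply,
            Prod.ext_iff]
          try ring_nf
          try simp [Complex.I_sq]
  all_goals
  · refine key _ _ _ _ _ _ _ ?_
    ext ⟨a, b⟩ ⟨c, d⟩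
    fin_cases a <;> fin_cases b <;> fin_cases c <;> fin_cases d <;>
      · simp [σx, σy, σz, Matrix.mul_apply, Fin.sum_univ_succ, Matrix.one_apply,
          Matrix.neg_apply, Prod.ext_iff]
        try ring_nf
        try simp [Complex.I_sq]
end

section
/- Let R i = PM i 0 * PM i 1 * PM i 2 and C j = PM 0 j * PM 1 j * PM 2 j. Then R 0 + R 1 + R 2 + C 0 + C 1 − C 2 = (6 : ℂ) • 1 as 4×4 matrices; consequently, for every density matrix ρ (a positive semidefinite matrix in Matrix (Fin 2 × Fin 2) (Fin 2 × Fin 2) ℂ with trace 1), trace (ρ * R 0) + trace (ρ * R 1) + trace (ρ * R 2) + trace (ρ * C 0) + trace (ρ * C 1) − trace (ρ * C 2) = 6. (Thus every quantum state reaches the value 6, exceeding the noncontextual bound 4: state-independent contextuality.) -/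
open Matrix Complex Kronecker
open scoped ComplexOrder

noncomputable def R (i : Fin 3) : Matrix (Fin 2 × Fin 2) (Fin 2 × Fin 2) ℂ :=
  PM i 0 * PM i 1 * PM i 2

noncomputable def C (j : Fin 3) : Matrix (Fin 2 × Fin 2) (Fin 2 × Fin 2) ℂ :=
  PM 0 j * PM 1 j * PM 2 j

/-!
Every observable of the square squares to `1`. By the mixed-product rule each row and column
product factors as a Kronecker product of two one-qubit products, each of which is `1` or `±I • 1`
(`σz σx σy = I • 1` and `σx σz σy = -I • 1`). All rows and the first two columns therefore
multiply to `1`, while the last column gives `(I • 1) ⊗ₖ (I • 1) = -1`. So the combination is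
`6 • 1`, whose expectation in any state of trace one is `6`.
-/

lemma σx_mul_σx : σx * σx = 1 := by
  ext i j; fin_cases i <;> fin_cases j <;> simp [σx]

lemma σz_mul_σz : σz * σz = 1 := by
  ext i j; fin_cases i <;> fin_cases j <;> simp [σz]

lemma σz_mul_σx_mul_σy : σz * σx * σy = I • 1 := by
  ext i j; fin_cases i <;> fin_cases j <;> simp [σx, σy, σz]

lemma σx_mul_σz_mul_σy : σx * σz * σy = -I • 1 := by
  ext i j; fin_cases i <;> fin_cases j <;> simp [σx, σy, σz]

section Kronecker

variable {α l m n l' m' n' p p' : Type*} [CommSemiring α]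

lemma kronecker_mul_kronecker_mul_kronecker [Fintype m] [Fintype m'] [Fintype n] [Fintype n']
    (A : Matrix l m α) (A' : Matrix m n α) (A'' : Matrix n p α)
    (B : Matrix l' m' α) (B' : Matrix m' n' α) (B'' : Matrix n' p' α) :
    A ⊗ₖ B * A' ⊗ₖ B' * A'' ⊗ₖ B'' = (A * A' * A'') ⊗ₖ (B * B' * B'') := by
  rw [mul_kronecker_mul, mul_kronecker_mul]

lemma smul_one_kronecker_smul_one [DecidableEq m] [DecidableEq n] (a b : α) :
    (a • 1 : Matrix m m α) ⊗ₖ (b • 1 : Matrix n n α) = (a * b) • 1 := by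
  rw [smul_kronecker, kronecker_smul, smul_smul, one_kronecker_one]

end Kronecker

lemma R_eq_one (i : Fin 3) : R i = 1 := by
  fin_cases i <;>
    simp only [R, PM, Fin.zero_eta, Fin.mk_one, Fin.reduceFinMk, cons_val, Fin.isValue,
      kronecker_mul_kronecker_mul_kronecker]
  · rw [mul_one, one_mul, σz_mul_σz, one_kronecker_one]
  · rw [mul_one, one_mul, σx_mul_σx, one_kronecker_one]
  · rw [σz_mul_σx_mul_σy, σx_mul_σz_mul_σy, smul_one_kronecker_smul_one, mul_neg, I_mul_I,
      neg_neg, one_smul]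

lemma C_zero : C 0 = 1 := by
  simp only [C, PM, cons_val, Fin.isValue, kronecker_mul_kronecker_mul_kronecker]
  rw [mul_one, one_mul, σz_mul_σz, σx_mul_σx, one_kronecker_one]

lemma C_one : C 1 = 1 := by
  simp only [C, PM, cons_val, Fin.isValue, kronecker_mul_kronecker_mul_kronecker]
  rw [mul_one, one_mul, σz_mul_σz, σx_mul_σx, one_kronecker_one]

lemma C_two : C 2 = -1 := by
  simp only [C, PM, cons_val, Fin.isValue, kronecker_mul_kronecker_mul_kronecker]
  rw [σz_mul_σx_mul_σy, smul_one_kronecker_smul_one, I_mul_I, neg_one_smul]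

theorem peres_mermin_state_independent_value :
    R 0 + R 1 + R 2 + C 0 + C 1 - C 2 = (6 : ℂ) • (1 : Matrix (Fin 2 × Fin 2) (Fin 2 × Fin 2) ℂ) ∧
    ∀ ρ : Matrix (Fin 2 × Fin 2) (Fin 2 × Fin 2) ℂ, ρ.PosSemidef → ρ.trace = 1 →
      (ρ * R 0).trace + (ρ * R 1).trace + (ρ * R 2).trace +
        (ρ * C 0).trace + (ρ * C 1).trace - (ρ * C 2).trace = 6 := by
  simp only [R_eq_one, C_zero, C_one, C_two]
  refine ⟨by module, fun ρ _ hρ => ?_⟩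
  simp only [mul_one, mul_neg, trace_neg, hρ]
  norm_num
end

section
/- Every ray attainable from the Yu–Oh states by a finite sequence of Lüders measurements of Yu–Oh projectors remains orthogonal to at least one Yu–Oh vector: for every n : ℕ and every L ∈ Sₙ there exists i : Fin 13 such that ⟪v i, w⟫ = 0 for all w ∈ L. -/
open scoped InnerProductSpace

noncomputable def v : Fin 13 → EuclideanSpace ℂ (Fin 3) :=
  ![!₂[1, 0, 0], !₂[0, 1, 0], !₂[0, 0, 1],
    !₂[0, 1, -1], !₂[0, 1, 1], !₂[1, 0, -1], !₂[1, 0, 1], !₂[1, -1, 0], !₂[1, 1, 0],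
    !₂[1, 1, 1], !₂[-1, 1, 1], !₂[1, -1, 1], !₂[1, 1, -1]]

noncomputable def P (i : Fin 13) (w : EuclideanSpace ℂ (Fin 3)) : EuclideanSpace ℂ (Fin 3) :=
  (Submodule.orthogonalProjectionOnto (Submodule.span ℂ {v i}) w : EuclideanSpace ℂ (Fin 3))

noncomputable def S : ℕ → Set (Submodule ℂ (EuclideanSpace ℂ (Fin 3)))
  | 0 => {L | ∃ i : Fin 13, L = Submodule.span ℂ {v i}}
  | (n + 1) => {L | ∃ L' ∈ S n, ∃ w ∈ L', w ≠ 0 ∧ ∃ i : Fin 13,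
      (P i w ≠ 0 ∧ L = Submodule.span ℂ {P i w}) ∨
      (w - P i w ≠ 0 ∧ L = Submodule.span ℂ {w - P i w})}

/-!
A ray in `S (n + 1)` is spanned either by `Pᵢ w`, which lies on the ray of `v i`, or by
`w - Pᵢ w`, which is orthogonal to `v i`; so no induction is needed. A ray lying on a Yu–Oh ray
(this covers `S 0` as well) is orthogonal to some Yu–Oh vector because every Yu–Oh vector is
orthogonal to another one.
-/

section InnerProductSpace

variable {𝕜 E : Type*} [RCLike 𝕜] [NormedAddCommGroup E] [InnerProductSpace 𝕜 E]

theorem inner_eq_zero_of_mem_span_singleton {u x w : E} (hx : ⟪u, x⟫_𝕜 = 0)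
    (hw : w ∈ Submodule.span 𝕜 {x}) : ⟪u, w⟫_𝕜 = 0 := by
  obtain ⟨c, rfl⟩ := Submodule.mem_span_singleton.mp hw
  rw [inner_smul_right, hx, mul_zero]

end InnerProductSpace

def orthogonalPartner : Fin 13 → Fin 13 := ![1, 0, 0, 0, 0, 1, 1, 2, 2, 3, 3, 4, 4]

theorem inner_v_orthogonalPartner (i : Fin 13) : ⟪v (orthogonalPartner i), v i⟫_ℂ = 0 := by
  fin_cases i <;>
    simp [orthogonalPartner, v, PiLp.inner_apply, Fin.sum_univ_three]

theorem P_mem_span_v (i : Fin 13) (w : EuclideanSpace ℂ (Fin 3)) :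
    P i w ∈ Submodule.span ℂ {v i} :=
  (Submodule.orthogonalProjectionOnto (Submodule.span ℂ {v i}) w).2

theorem inner_v_sub_P (i : Fin 13) (w : EuclideanSpace ℂ (Fin 3)) : ⟪v i, w - P i w⟫_ℂ = 0 :=
  Submodule.mem_orthogonal_singleton_iff_inner_right.mp
    (Submodule.sub_starProjection_mem_orthogonal (K := Submodule.span ℂ {v i}) w)

theorem exists_orthogonal_of_mem_span_v {i : Fin 13} {x : EuclideanSpace ℂ (Fin 3)}
    (hx : x ∈ Submodule.span ℂ {v i}) :
    ∃ j : Fin 13, ∀ w ∈ Submodule.span ℂ {x}, ⟪v j, w⟫_ℂ = 0 :=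
  ⟨orthogonalPartner i, fun _ ↦ inner_eq_zero_of_mem_span_singleton
    (inner_eq_zero_of_mem_span_singleton (inner_v_orthogonalPartner i) hx)⟩

theorem attainable_rays_orthogonal_to_some_yu_oh_vector :
    ∀ n : ℕ, ∀ L ∈ S n, ∃ i : Fin 13, ∀ w ∈ L, ⟪v i, w⟫_ℂ = 0 := by
  rintro (_ | n) L hL
  · obtain ⟨i, rfl⟩ := hL
    exact exists_orthogonal_of_mem_span_v (Submodule.mem_span_singleton_self _)
  · obtain ⟨-, -, w, -, -, i, ⟨-, rfl⟩ | ⟨-, rfl⟩⟩ := hL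
    · exact exists_orthogonal_of_mem_span_v (P_mem_span_v i w)
    · exact ⟨i, fun _ ↦ inner_eq_zero_of_mem_span_singleton (inner_v_sub_P i w)⟩
end

section
/- Every ray attainable from the Yu–Oh states by a finite sequence of Lüders measurements of Yu–Oh projectors is spanned by a vector with real entries: for every n : ℕ and every L ∈ Sₙ there exists a nonzero w ∈ L such that every coordinate of w is real (equals its own complex conjugate). -/
open scoped InnerProductSpace

/-! Every Yu–Oh vector has real entries, and for real `a` the projection
`P_a x = (⟪a, x⟫ / ‖a‖²) • a` and its complement `x - P_a x` preserve real vectors. A Lüders step maps a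
ray `ℂ ∙ u` to the ray spanned by the image of `u`, so by induction every attainable ray is
spanned by a nonzero real vector. -/

open scoped ComplexConjugate

section RealVector

variable {ι : Type*}

def IsRealVector (x : EuclideanSpace ℂ ι) : Prop := ∀ k, conj (x k) = x k

namespace IsRealVector

variable {x y : EuclideanSpace ℂ ι}

lemma sub (hx : IsRealVector x) (hy : IsRealVector y) : IsRealVector (x - y) := fun k => by
  simp only [PiLp.sub_apply, map_sub, hx k, hy k]

lemma smul {c : ℂ} (hc : conj c = c) (hx : IsRealVector x) : IsRealVector (c • x) := fun k => by
  simp only [PiLp.smul_apply, smul_eq_mul, map_mul, hc, hx k]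

variable [Fintype ι]

lemma conj_inner (hx : IsRealVector x) (hy : IsRealVector y) : conj ⟪x, y⟫_ℂ = ⟪x, y⟫_ℂ := by
  simp only [PiLp.inner_apply, RCLike.inner_apply, map_sum, map_mul, hx _, hy _]

lemma starProjection_span_singleton {a : EuclideanSpace ℂ ι} (ha : IsRealVector a)
    (hx : IsRealVector x) : IsRealVector ((ℂ ∙ a).starProjection x) := by
  rw [Submodule.starProjection_singleton]
  refine smul ?_ ha
  rw [map_div₀, RCLike.conj_ofReal, ha.conj_inner hx]

lemma starProjection_orthogonal_span_singleton {a : EuclideanSpace ℂ ι} (ha : IsRealVector a)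
    (hx : IsRealVector x) : IsRealVector ((ℂ ∙ a)ᗮ.starProjection x) := by
  rw [Submodule.starProjection_orthogonal_val]
  exact hx.sub (starProjection_span_singleton ha hx)

end IsRealVector

end RealVector

lemma span_singleton_apply_eq_of_mem_span_singleton {K E F : Type*} [Field K]
    [AddCommGroup E] [Module K E] [AddCommGroup F] [Module K F] (f : E →ₗ[K] F) {u w : E}
    (hw : w ∈ K ∙ u) (hfw : f w ≠ 0) : f u ≠ 0 ∧ (K ∙ f w) = K ∙ f u := by
  obtain ⟨c, rfl⟩ := Submodule.mem_span_singleton.mp hw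
  rw [map_smul] at hfw ⊢
  exact ⟨right_ne_zero_of_smul hfw,
    Submodule.span_singleton_smul_eq (left_ne_zero_of_smul hfw).isUnit _⟩

lemma isRealVector_v (i : Fin 13) : IsRealVector (v i) := by
  intro k
  fin_cases i <;> fin_cases k <;> simp [v]

lemma v_ne_zero (i : Fin 13) : v i ≠ 0 := by
  fin_cases i <;> simp [v]

lemma sub_P_eq_starProjection_orthogonal (i : Fin 13) (w : EuclideanSpace ℂ (Fin 3)) :
    w - P i w = (ℂ ∙ v i)ᗮ.starProjection w :=
  (Submodule.starProjection_orthogonal_val w).symm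

lemma exists_isRealVector_of_mem_S (n : ℕ) :
    ∀ L ∈ S n, ∃ u, u ≠ 0 ∧ IsRealVector u ∧ L = ℂ ∙ u := by
  induction n with
  | zero =>
    rintro L ⟨i, rfl⟩
    exact ⟨v i, v_ne_zero i, isRealVector_v i, rfl⟩
  | succ n ih =>
    rintro L ⟨L', hL', w, hw, -, i, ⟨hPw, rfl⟩ | ⟨hQw, rfl⟩⟩
    all_goals obtain ⟨u, -, hu, rfl⟩ := ih L' hL'
    · obtain ⟨hPu, hspan⟩ :=
        span_singleton_apply_eq_of_mem_span_singleton (ℂ ∙ v i).starProjection.toLinearMap hw hPw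
      exact ⟨_, hPu, (isRealVector_v i).starProjection_span_singleton hu, hspan⟩
    · rw [sub_P_eq_starProjection_orthogonal] at hQw ⊢
      obtain ⟨hQu, hspan⟩ :=
        span_singleton_apply_eq_of_mem_span_singleton (ℂ ∙ v i)ᗮ.starProjection.toLinearMap hw hQw
      exact ⟨_, hQu, (isRealVector_v i).starProjection_orthogonal_span_singleton hu, hspan⟩

theorem attainable_rays_spanned_by_real_vector :
    ∀ n : ℕ, ∀ L ∈ S n, ∃ w ∈ L, w ≠ 0 ∧
      ∀ k : Fin 3, (starRingEnd ℂ) (w k) = w k := by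
  intro n L hL
  obtain ⟨u, hu0, hu, rfl⟩ := exists_isRealVector_of_mem_S n L hL
  exact ⟨u, Submodule.mem_span_singleton_self u, hu0, hu⟩
end
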